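/- Suppose α = β in the gadget instance. Then the gadget instance is feasible (there exists a matrix M ∈ {R,G,Y}^{n×(2n+2)} with the prescribed row and column color counts) if and only if α_u + α_v ≥ 1. -/

import Mathlib

/-! The gadget instance of the 3-color tomography problem on an `n × (2n+2)` grid.
Rows `1,…,n` and columns `1,…,2n+2` are 1-indexed.  Colors are encoded as elements of
`Fin 3`: `0 = R` (red), `1 = G` (green), `2 = Y` (yellow). -/

/-- Red row projections: `r^R_i = i+1` if `i ∈ {u,v}` and `i` otherwise. -/
def gadgetRR (u v i : ℕ) : ℕ := if i = u ∨ i = v then i + 1 else i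

/-- Green row projections: `r^G_i = i` if `i ∈ {u,v}` and `i+1` otherwise. -/
def gadgetRG (u v i : ℕ) : ℕ := if i = u ∨ i = v then i else i + 1

/-- Yellow row projections: `r^Y_i = 2n+2 − r^R_i − r^G_i`. -/
def gadgetRY (n u v i : ℕ) : ℕ := 2 * n + 2 - gadgetRR u v i - gadgetRG u v i

/-- Red column projections: `s^R_j = n−j+α_j` for `1 ≤ j ≤ n`, `s^R_{n+1} = 1`,
`s^R_{n+2} = n−k+1`, `s^R_{n+2+j} = 0` for `1 ≤ j ≤ n`. -/
def gadgetSR (n k : ℕ) (α : ℕ → ℕ) (q : ℕ) : ℕ :=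
  if q ≤ n then n - q + α q
  else if q = n + 1 then 1
  else if q = n + 2 then n - k + 1
  else 0

/-- Green column projections: `s^G_j = 0` for `1 ≤ j ≤ n`, `s^G_{n+1} = n−1`,
`s^G_{n+2} = k−1`, `s^G_{n+2+j} = n−j+1−β_j` for `1 ≤ j ≤ n`. -/
def gadgetSG (n k : ℕ) (β : ℕ → ℕ) (q : ℕ) : ℕ :=
  if q ≤ n then 0
  else if q = n + 1 then n - 1
  else if q = n + 2 then k - 1
  else n - (q - (n + 2)) + 1 - β (q - (n + 2))

/-- Yellow column projections: `s^Y_q = n − s^R_q − s^G_q`. -/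
def gadgetSY (n k : ℕ) (α β : ℕ → ℕ) (q : ℕ) : ℕ :=
  n - gadgetSR n k α q - gadgetSG n k β q

/-- Feasibility of the gadget instance: there is a coloring `M` of the `n × (2n+2)` grid
with colors `{R,G,Y}` realizing all prescribed row and column color counts. -/
def GadgetFeasible (n k u v : ℕ) (α β : ℕ → ℕ) : Prop :=
  ∃ M : ℕ → ℕ → Fin 3,
    (∀ i, 1 ≤ i → i ≤ n →
      ((Finset.Icc 1 (2 * n + 2)).filter (fun q => M i q = 0)).card = gadgetRR u v i ∧
      ((Finset.Icc 1 (2 * n + 2)).filter (fun q => M i q = 1)).card = gadgetRG u v i ∧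
      ((Finset.Icc 1 (2 * n + 2)).filter (fun q => M i q = 2)).card = gadgetRY n u v i) ∧
    (∀ q, 1 ≤ q → q ≤ 2 * n + 2 →
      ((Finset.Icc 1 n).filter (fun i => M i q = 0)).card = gadgetSR n k α q ∧
      ((Finset.Icc 1 n).filter (fun i => M i q = 1)).card = gadgetSG n k β q ∧
      ((Finset.Icc 1 n).filter (fun i => M i q = 2)).card = gadgetSY n k α β q)


/-!
The two middle columns contain no yellow, so row `i` has at most `2i - 1` cells that are red in
the left block or green in the right block. Comparing this with the column projections in the
top `m + 1` rows bounds the red cells of row `m + 1` in the left block by `m + α (m + 1)`. The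
right block has no red, so a row `w ∈ {u, v}` (which needs `w + 1` red cells) with `α w = 0` is
red in both middle columns; but column `n + 1` has only one red cell.

Conversely, if `α v = 1` the staircase coloring `gadgetSolution` realizes the projections, and
the case `α u = 1` follows since the instance is symmetric in `u` and `v`.
-/

open Finset

theorem Finset.sum_Icc_one_add {M : Type*} [AddCommMonoid M] (f : ℕ → M) (a b : ℕ) :
    ∑ q ∈ Icc 1 (a + b), f q = ∑ q ∈ Icc 1 a, f q + ∑ j ∈ Icc 1 b, f (a + j) := by
  induction b with
  | zero => simp
  | succ b ih =>
    rw [← add_assoc, sum_Icc_succ_top (by omega), sum_Icc_succ_top (by omega), ih, add_assoc,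
      add_assoc]

theorem Finset.sum_Icc_two_mul_sub_one (m : ℕ) : ∑ i ∈ Icc 1 m, (2 * i - 1) = m ^ 2 := by
  induction m with
  | zero => simp
  | succ m ih => rw [sum_Icc_succ_top (by omega), ih]; grind

theorem Finset.sum_Icc_two_mul_sub (m : ℕ) : ∑ j ∈ Icc 1 m, 2 * (m + 1 - j) = m * (m + 1) := by
  induction m with
  | zero => simp
  | succ m ih =>
    have hshift : ∑ j ∈ Icc 1 m, 2 * (m + 1 + 1 - j) = ∑ j ∈ Icc 1 m, (2 * (m + 1 - j) + 2) :=
      sum_congr rfl fun j hj => by rw [mem_Icc] at hj; omega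
    rw [sum_Icc_succ_top (by omega), hshift, sum_add_distrib, ih, sum_const, Nat.card_Icc,
      smul_eq_mul]
    ring_nf
    omega

theorem Finset.card_filter_eq_two {ι : Type*} (s : Finset ι) (f : ι → Fin 3) :
    #{x ∈ s | f x = 2} = #s - #{x ∈ s | f x = 0} - #{x ∈ s | f x = 1} := by
  suffices #{x ∈ s | f x = 0} + #{x ∈ s | f x = 1} + #{x ∈ s | f x = 2} = #s by omega
  rw [card_filter, card_filter, card_filter, ← sum_add_distrib, ← sum_add_distrib,
    card_eq_sum_ones]
  refine sum_congr rfl fun x _ => ?_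
  generalize f x = c
  fin_cases c <;> rfl

theorem Finset.card_filter_Icc_two_mul_add_two (p : ℕ → Prop) [DecidablePred p] (n : ℕ) :
    #{q ∈ Icc 1 (2 * n + 2) | p q} = #{j ∈ Icc 1 n | p j} + (if p (n + 1) then 1 else 0) +
      (if p (n + 2) then 1 else 0) + #{j ∈ Icc 1 n | p (n + 2 + j)} := by
  rw [card_filter, show 2 * n + 2 = n + 2 + n by ring, sum_Icc_one_add,
    sum_Icc_succ_top (by omega), sum_Icc_succ_top (by omega), card_filter, card_filter]

theorem Finset.card_filter_Icc_le_card_filter_Icc_add (p : ℕ → Prop) [DecidablePred p] {m n : ℕ} :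
    #{i ∈ Icc 1 n | p i} ≤ #{i ∈ Icc 1 m | p i} + (n - m) := by
  calc #{i ∈ Icc 1 n | p i} ≤ #({i ∈ Icc 1 m | p i} ∪ Icc (m + 1) n) := by
        refine card_le_card fun i hi => ?_
        simp only [mem_filter, mem_Icc, mem_union] at hi ⊢
        by_cases him : i ≤ m
        · exact Or.inl ⟨⟨hi.1.1, him⟩, hi.2⟩
        · exact Or.inr ⟨by omega, hi.1.2⟩
    _ ≤ #{i ∈ Icc 1 m | p i} + (n - m) := by
        grw [card_union_le, Nat.card_Icc, Nat.add_sub_add_right]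

theorem Finset.card_Icc_filter_le (n t : ℕ) (ht : t ≤ n) : #{j ∈ Icc 1 n | j ≤ t} = t := by
  rw [show {j ∈ Icc 1 n | j ≤ t} = Icc 1 t by ext j; simp only [mem_filter, mem_Icc]; omega,
    Nat.card_Icc, Nat.add_sub_cancel]

theorem Finset.card_Icc_filter_le_sub_one_add {n j : ℕ} (a : ℕ → ℕ) (ha : ∀ i ∈ Icc 1 n, a i ≤ 1)
    (hj : j ∈ Icc 1 n) : #{i ∈ Icc 1 n | j ≤ i - 1 + a i} = n - j + a j := by
  have haj := ha j hj
  rw [mem_Icc] at hj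
  have : {i ∈ Icc 1 n | j ≤ i - 1 + a i} = Icc (j + 1 - a j) n := by
    ext i
    simp only [mem_filter, mem_Icc]
    have hai : 1 ≤ i → i ≤ n → a i ≤ 1 := fun h1 h2 => ha i (mem_Icc.2 ⟨h1, h2⟩)
    rcases eq_or_ne i j with rfl | hij <;> omega
  rw [this, Nat.card_Icc]
  omega

theorem Finset.card_filter_eq_zero_add_sum {ι : Type*} {s : Finset ι} (a : ι → ℕ)
    (ha : ∀ i ∈ s, a i ≤ 1) : #{i ∈ s | a i = 0} + ∑ i ∈ s, a i = #s := by
  rw [← card_filter_add_card_filter_not (s := s) (p := fun i => a i = 0), add_right_inj,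
    card_filter]
  refine sum_congr rfl fun i hi => ?_
  have := ha i hi
  split_ifs <;> omega

theorem mem_Icc_two_mul_add_two {n q : ℕ} (hq : q ∈ Icc 1 (2 * n + 2)) :
    q ∈ Icc 1 n ∨ q = n + 1 ∨ q = n + 2 ∨ ∃ j ∈ Icc 1 n, q = n + 2 + j := by
  simp only [mem_Icc] at hq ⊢
  by_cases h : q ≤ n + 2
  · omega
  · exact Or.inr (Or.inr (Or.inr ⟨q - (n + 2), by omega, by omega⟩))

def GadgetRowCounts (n u v : ℕ) (M : ℕ → ℕ → Fin 3) : Prop :=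
  ∀ i ∈ Icc 1 n,
    #{q ∈ Icc 1 (2 * n + 2) | M i q = 0} = gadgetRR u v i ∧
    #{q ∈ Icc 1 (2 * n + 2) | M i q = 1} = gadgetRG u v i ∧
    #{q ∈ Icc 1 (2 * n + 2) | M i q = 2} = gadgetRY n u v i

def GadgetColCounts (n k : ℕ) (α β : ℕ → ℕ) (M : ℕ → ℕ → Fin 3) : Prop :=
  ∀ q ∈ Icc 1 (2 * n + 2),
    #{i ∈ Icc 1 n | M i q = 0} = gadgetSR n k α q ∧
    #{i ∈ Icc 1 n | M i q = 1} = gadgetSG n k β q ∧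
    #{i ∈ Icc 1 n | M i q = 2} = gadgetSY n k α β q

theorem gadgetFeasible_iff {n k u v : ℕ} {α β : ℕ → ℕ} :
    GadgetFeasible n k u v α β ↔ ∃ M, GadgetRowCounts n u v M ∧ GadgetColCounts n k α β M := by
  simp only [GadgetFeasible, GadgetRowCounts, GadgetColCounts, mem_Icc, and_imp]

theorem gadgetRR_comm (u v : ℕ) : gadgetRR u v = gadgetRR v u := by
  funext i
  simp only [gadgetRR, or_comm]

theorem gadgetRG_comm (u v : ℕ) : gadgetRG u v = gadgetRG v u := by
  funext i
  simp only [gadgetRG, or_comm]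

theorem gadgetRowCounts_comm {n u v : ℕ} {M : ℕ → ℕ → Fin 3} :
    GadgetRowCounts n u v M ↔ GadgetRowCounts n v u M := by
  simp only [GadgetRowCounts, gadgetRY, gadgetRR_comm u v, gadgetRG_comm u v]

theorem gadgetFeasible_comm {n k u v : ℕ} {α β : ℕ → ℕ} :
    GadgetFeasible n k u v α β ↔ GadgetFeasible n k v u α β := by
  simp only [gadgetFeasible_iff, gadgetRowCounts_comm]

theorem gadgetRR_add_gadgetRG (u v i : ℕ) : gadgetRR u v i + gadgetRG u v i = 2 * i + 1 := by
  unfold gadgetRR gadgetRG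
  split_ifs <;> omega

theorem gadgetRowCounts_of_red_green {n u v : ℕ} {M : ℕ → ℕ → Fin 3}
    (h : ∀ i ∈ Icc 1 n, #{q ∈ Icc 1 (2 * n + 2) | M i q = 0} = gadgetRR u v i ∧
      #{q ∈ Icc 1 (2 * n + 2) | M i q = 1} = gadgetRG u v i) :
    GadgetRowCounts n u v M := fun i hi => by
  obtain ⟨hR, hG⟩ := h i hi
  refine ⟨hR, hG, ?_⟩
  rw [card_filter_eq_two, hR, hG, Nat.card_Icc, Nat.add_sub_cancel, gadgetRY]

theorem gadgetColCounts_of_red_green {n k : ℕ} {α β : ℕ → ℕ} {M : ℕ → ℕ → Fin 3}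
    (h : ∀ q ∈ Icc 1 (2 * n + 2), #{i ∈ Icc 1 n | M i q = 0} = gadgetSR n k α q ∧
      #{i ∈ Icc 1 n | M i q = 1} = gadgetSG n k β q) :
    GadgetColCounts n k α β M := fun q hq => by
  obtain ⟨hR, hG⟩ := h q hq
  refine ⟨hR, hG, ?_⟩
  rw [card_filter_eq_two, hR, hG, Nat.card_Icc, Nat.add_sub_cancel, gadgetSY]

section ColumnProjections

variable {n k : ℕ} {α : ℕ → ℕ}

theorem gadgetSR_of_le {q : ℕ} (hq : q ≤ n) : gadgetSR n k α q = n - q + α q := if_pos hq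

theorem gadgetSR_add_one : gadgetSR n k α (n + 1) = 1 := by simp [gadgetSR]

theorem gadgetSR_add_two : gadgetSR n k α (n + 2) = n - k + 1 := by simp [gadgetSR]

theorem gadgetSR_add_two_add {j : ℕ} (hj : 1 ≤ j) : gadgetSR n k α (n + 2 + j) = 0 := by
  simp only [gadgetSR]
  split_ifs <;> omega

theorem gadgetSG_of_le {q : ℕ} (hq : q ≤ n) : gadgetSG n k α q = 0 := if_pos hq

theorem gadgetSG_add_one : gadgetSG n k α (n + 1) = n - 1 := by simp [gadgetSG]

theorem gadgetSG_add_two : gadgetSG n k α (n + 2) = k - 1 := by simp [gadgetSG]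

theorem gadgetSG_add_two_add {j : ℕ} (hj : 1 ≤ j) :
    gadgetSG n k α (n + 2 + j) = n - j + 1 - α j := by
  simp only [gadgetSG, Nat.add_sub_cancel_left]
  split_ifs <;> omega

end ColumnProjections

section Necessity

variable {n k u v : ℕ} {α β : ℕ → ℕ} {M : ℕ → ℕ → Fin 3}

theorem GadgetColCounts.ne_two_of_middle (hcol : GadgetColCounts n k α β M) {i : ℕ}
    (hi : i ∈ Icc 1 n) : M i (n + 1) ≠ 2 ∧ M i (n + 2) ≠ 2 := by
  have h₁ := (hcol (n + 1) (mem_Icc.2 ⟨by omega, by omega⟩)).2.2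
  have h₂ := (hcol (n + 2) (mem_Icc.2 ⟨by omega, by omega⟩)).2.2
  have e₁ : gadgetSY n k α β (n + 1) = 0 := by
    rw [gadgetSY, gadgetSR_add_one, gadgetSG_add_one]
    omega
  have e₂ : gadgetSY n k α β (n + 2) = 0 := by
    rw [gadgetSY, gadgetSR_add_two, gadgetSG_add_two]
    omega
  exact ⟨card_filter_eq_zero_iff.1 (h₁.trans e₁) i hi, card_filter_eq_zero_iff.1 (h₂.trans e₂) i hi⟩

theorem GadgetColCounts.ne_zero_of_right (hcol : GadgetColCounts n k α β M) {i j : ℕ}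
    (hi : i ∈ Icc 1 n) (hj : j ∈ Icc 1 n) : M i (n + 2 + j) ≠ 0 := by
  rw [mem_Icc] at hj
  have h := (hcol (n + 2 + j) (mem_Icc.2 ⟨by omega, by omega⟩)).1
  exact card_filter_eq_zero_iff.1 (h.trans (gadgetSR_add_two_add hj.1)) i hi

theorem GadgetColCounts.le_card_red_left (hcol : GadgetColCounts n k α β M) {j m : ℕ}
    (hj : j ∈ Icc 1 m) (hm : m ≤ n) : m - j + α j ≤ #{i ∈ Icc 1 m | M i j = 0} := by
  rw [mem_Icc] at hj
  have h := (hcol j (mem_Icc.2 ⟨hj.1, by omega⟩)).1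
  have := card_filter_Icc_le_card_filter_Icc_add (fun i => M i j = 0) (m := m) (n := n)
  rw [h, gadgetSR_of_le (by omega)] at this
  omega

theorem GadgetColCounts.le_card_green_right (hcol : GadgetColCounts n k α β M) {j m : ℕ}
    (hj : j ∈ Icc 1 m) (hm : m ≤ n) :
    m + 1 - j - β j ≤ #{i ∈ Icc 1 m | M i (n + 2 + j) = 1} := by
  rw [mem_Icc] at hj
  have h := (hcol (n + 2 + j) (mem_Icc.2 ⟨by omega, by omega⟩)).2.1
  have := card_filter_Icc_le_card_filter_Icc_add (fun i => M i (n + 2 + j) = 1) (m := m) (n := n)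
  rw [h, gadgetSG_add_two_add hj.1] at this
  omega

theorem GadgetRowCounts.card_red_left_add_card_green_right_le (hrow : GadgetRowCounts n u v M)
    (hcol : GadgetColCounts n k α β M) {i : ℕ} (hi : i ∈ Icc 1 n) :
    #{j ∈ Icc 1 n | M i j = 0} + #{j ∈ Icc 1 n | M i (n + 2 + j) = 1} + 2 ≤ 2 * i + 1 := by
  have hR := (hrow i hi).1
  have hG := (hrow i hi).2.1
  rw [card_filter_Icc_two_mul_add_two] at hR hG
  have hRG := gadgetRR_add_gadgetRG u v i
  have hmid : ∀ c : Fin 3, c ≠ 2 → (if c = 0 then 1 else 0) + (if c = 1 then 1 else 0) = 1 := by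
    decide
  have h₁ := hmid _ (hcol.ne_two_of_middle hi).1
  have h₂ := hmid _ (hcol.ne_two_of_middle hi).2
  omega

theorem GadgetRowCounts.card_red_left_le (hrow : GadgetRowCounts n u v M)
    (hcol : GadgetColCounts n k α α M) (hα : ∀ j ∈ Icc 1 n, α j ≤ 1) {m : ℕ} (hm : m + 1 ≤ n) :
    #{j ∈ Icc 1 n | M (m + 1) j = 0} ≤ m + α (m + 1) := by
  set red : ℕ → ℕ := fun i => #{j ∈ Icc 1 n | M i j = 0}
  set green : ℕ → ℕ := fun i => #{j ∈ Icc 1 n | M i (n + 2 + j) = 1}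
  change red (m + 1) ≤ _
  have hrows : ∑ i ∈ Icc 1 (m + 1), (red i + green i) ≤ (m + 1) ^ 2 := by
    rw [← sum_Icc_two_mul_sub_one]
    refine sum_le_sum fun i hi => ?_
    have := hrow.card_red_left_add_card_green_right_le hcol
      (Icc_subset_Icc_right (by omega) hi)
    simp only [red, green]
    omega
  have hred : ∑ j ∈ Icc 1 m, (m - j + α j) ≤ ∑ i ∈ Icc 1 m, red i :=
    calc ∑ j ∈ Icc 1 m, (m - j + α j) ≤ ∑ j ∈ Icc 1 m, #{i ∈ Icc 1 m | M i j = 0} :=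
          sum_le_sum fun j hj => hcol.le_card_red_left hj (by omega)
      _ ≤ ∑ j ∈ Icc 1 n, #{i ∈ Icc 1 m | M i j = 0} :=
          sum_le_sum_of_subset (Icc_subset_Icc_right (by omega))
      _ = ∑ i ∈ Icc 1 m, red i :=
          (sum_card_bipartiteAbove_eq_sum_card_bipartiteBelow (fun i j => M i j = 0)).symm
  have hgreen : ∑ j ∈ Icc 1 (m + 1), (m + 2 - j - α j) ≤ ∑ i ∈ Icc 1 (m + 1), green i :=
    calc ∑ j ∈ Icc 1 (m + 1), (m + 2 - j - α j)
        ≤ ∑ j ∈ Icc 1 (m + 1), #{i ∈ Icc 1 (m + 1) | M i (n + 2 + j) = 1} :=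
          sum_le_sum fun j hj => hcol.le_card_green_right hj hm
      _ ≤ ∑ j ∈ Icc 1 n, #{i ∈ Icc 1 (m + 1) | M i (n + 2 + j) = 1} :=
          sum_le_sum_of_subset (Icc_subset_Icc_right hm)
      _ = ∑ i ∈ Icc 1 (m + 1), green i :=
          (sum_card_bipartiteAbove_eq_sum_card_bipartiteBelow
            (fun i j => M i (n + 2 + j) = 1)).symm
  have hpair : ∑ j ∈ Icc 1 m, ((m - j + α j) + (m + 2 - j - α j)) = m * (m + 1) := by
    rw [← sum_Icc_two_mul_sub m]
    refine sum_congr rfl fun j hj => ?_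
    have := hα j (Icc_subset_Icc_right (by omega) hj)
    rw [mem_Icc] at hj
    omega
  rw [sum_add_distrib, sum_Icc_succ_top (by omega)] at hrows
  rw [sum_Icc_succ_top (by omega)] at hgreen
  rw [sum_add_distrib] at hpair
  have := hα (m + 1) (mem_Icc.2 ⟨by omega, hm⟩)
  have hsq : (m + 1) ^ 2 = m * (m + 1) + (m + 1) := by ring
  omega

theorem GadgetRowCounts.middle_red_of_eq_zero (hrow : GadgetRowCounts n u v M)
    (hcol : GadgetColCounts n k α α M) (hα : ∀ j ∈ Icc 1 n, α j ≤ 1) {w : ℕ} (hw : w ∈ Icc 1 n)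
    (hwuv : w = u ∨ w = v) (hαw : α w = 0) : M w (n + 1) = 0 := by
  obtain ⟨m, rfl⟩ : ∃ m, w = m + 1 := ⟨w - 1, by rw [mem_Icc] at hw; omega⟩
  have hleft := hrow.card_red_left_le hcol hα (mem_Icc.1 hw).2
  have hright : #{j ∈ Icc 1 n | M (m + 1) (n + 2 + j) = 0} = 0 :=
    card_filter_eq_zero_iff.2 fun j hj => hcol.ne_zero_of_right hw hj
  have hR := (hrow (m + 1) hw).1
  rw [card_filter_Icc_two_mul_add_two, hright, gadgetRR, if_pos hwuv] at hR
  by_contra h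
  rw [if_neg h] at hR
  split_ifs at hR <;> omega

theorem one_le_add_of_gadgetFeasible (hu : u ∈ Icc 1 n) (hv : v ∈ Icc 1 n) (huv : u ≠ v)
    (hα : ∀ j ∈ Icc 1 n, α j ≤ 1) (h : GadgetFeasible n k u v α α) : 1 ≤ α u + α v := by
  obtain ⟨M, hrow, hcol⟩ := gadgetFeasible_iff.1 h
  by_contra! hαuv
  have hred : ∀ w ∈ ({u, v} : Finset ℕ), w ∈ {i ∈ Icc 1 n | M i (n + 1) = 0} := by
    simp only [mem_insert, mem_singleton, mem_filter]
    rintro w (rfl | rfl)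
    · exact ⟨hu, hrow.middle_red_of_eq_zero hcol hα hu (Or.inl rfl) (by omega)⟩
    · exact ⟨hv, hrow.middle_red_of_eq_zero hcol hα hv (Or.inr rfl) (by omega)⟩
  have hcard := (hcol (n + 1) (mem_Icc.2 ⟨by omega, by rw [mem_Icc] at hu; omega⟩)).1
  rw [gadgetSR_add_one] at hcard
  have := card_le_card hred
  rw [card_pair huv, hcard] at this
  omega

end Necessity

/-- Row `i` gets `i - 1 + α i` red cells in the left block and `i - α i` green cells in the
right block. -/
def gadgetSolution (n u v : ℕ) (α : ℕ → ℕ) (i q : ℕ) : Fin 3 :=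
  if q ≤ n then (if q ≤ i - 1 + α i then 0 else 2)
  else if q = n + 1 then (if i = u then 0 else 1)
  else if q = n + 2 then (if i = v ∨ α i = 0 then 0 else 1)
  else if q - (n + 2) ≤ i - 1 + (1 - α i) then 1 else 2

section Sufficiency

variable {n k u v : ℕ} {α : ℕ → ℕ}

theorem gadgetSolution_eq_zero_iff_of_le {i q : ℕ} (hq : q ≤ n) :
    gadgetSolution n u v α i q = 0 ↔ q ≤ i - 1 + α i := by
  rw [gadgetSolution, if_pos hq]
  split_ifs with h <;> simp [h]

theorem gadgetSolution_ne_one_of_le {i q : ℕ} (hq : q ≤ n) : gadgetSolution n u v α i q ≠ 1 := by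
  rw [gadgetSolution, if_pos hq]
  split_ifs <;> decide

theorem gadgetSolution_add_one_eq_zero_iff (i : ℕ) :
    gadgetSolution n u v α i (n + 1) = 0 ↔ i = u := by
  rw [gadgetSolution, if_neg (by omega), if_pos rfl]
  split_ifs with h <;> simp [h]

theorem gadgetSolution_add_one_eq_one_iff (i : ℕ) :
    gadgetSolution n u v α i (n + 1) = 1 ↔ i ≠ u := by
  rw [gadgetSolution, if_neg (by omega), if_pos rfl]
  split_ifs with h <;> simp [h]

theorem gadgetSolution_add_two_eq_zero_iff (i : ℕ) :
    gadgetSolution n u v α i (n + 2) = 0 ↔ i = v ∨ α i = 0 := by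
  rw [gadgetSolution, if_neg (by omega), if_neg (by omega), if_pos rfl]
  split_ifs with h <;> simp [h]

theorem gadgetSolution_add_two_eq_one_iff (i : ℕ) :
    gadgetSolution n u v α i (n + 2) = 1 ↔ ¬(i = v ∨ α i = 0) := by
  rw [gadgetSolution, if_neg (by omega), if_neg (by omega), if_pos rfl]
  split_ifs with h <;> simp [h]

theorem gadgetSolution_add_two_add_eq_one_iff {i j : ℕ} (hj : 1 ≤ j) :
    gadgetSolution n u v α i (n + 2 + j) = 1 ↔ j ≤ i - 1 + (1 - α i) := by
  rw [gadgetSolution, if_neg (by omega), if_neg (by omega), if_neg (by omega),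
    Nat.add_sub_cancel_left]
  split_ifs with h <;> simp [h]

theorem gadgetSolution_add_two_add_ne_zero {i j : ℕ} (hj : 1 ≤ j) :
    gadgetSolution n u v α i (n + 2 + j) ≠ 0 := by
  rw [gadgetSolution, if_neg (by omega), if_neg (by omega), if_neg (by omega)]
  split_ifs <;> decide

theorem gadgetRowCounts_gadgetSolution (huv : u ≠ v) (hα : ∀ j ∈ Icc 1 n, α j ≤ 1)
    (hαv : α v = 1) : GadgetRowCounts n u v (gadgetSolution n u v α) := by
  refine gadgetRowCounts_of_red_green fun i hi => ?_
  have hαi := hα i hi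
  rw [mem_Icc] at hi
  have hredLeft : #{j ∈ Icc 1 n | gadgetSolution n u v α i j = 0} = i - 1 + α i := by
    rw [filter_congr fun j hj => gadgetSolution_eq_zero_iff_of_le (mem_Icc.1 hj).2,
      card_Icc_filter_le n _ (by omega)]
  have hredRight : #{j ∈ Icc 1 n | gadgetSolution n u v α i (n + 2 + j) = 0} = 0 :=
    card_filter_eq_zero_iff.2 fun j hj => gadgetSolution_add_two_add_ne_zero (mem_Icc.1 hj).1
  have hgreenLeft : #{j ∈ Icc 1 n | gadgetSolution n u v α i j = 1} = 0 :=
    card_filter_eq_zero_iff.2 fun j hj => gadgetSolution_ne_one_of_le (mem_Icc.1 hj).2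
  have hgreenRight : #{j ∈ Icc 1 n | gadgetSolution n u v α i (n + 2 + j) = 1} = i - α i := by
    rw [filter_congr fun j hj => gadgetSolution_add_two_add_eq_one_iff (mem_Icc.1 hj).1,
      card_Icc_filter_le n _ (by omega)]
    omega
  rw [card_filter_Icc_two_mul_add_two, card_filter_Icc_two_mul_add_two, hredLeft, hredRight,
    hgreenLeft, hgreenRight, gadgetRR, gadgetRG]
  simp only [gadgetSolution_add_one_eq_zero_iff, gadgetSolution_add_one_eq_one_iff,
    gadgetSolution_add_two_eq_zero_iff, gadgetSolution_add_two_eq_one_iff]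
  have hαi_of_eq : i = v → α i = 1 := by rintro rfl; exact hαv
  split_ifs <;> omega

theorem gadgetColCounts_gadgetSolution (hu : u ∈ Icc 1 n) (hv : v ∈ Icc 1 n)
    (hα : ∀ j ∈ Icc 1 n, α j ≤ 1) (hαv : α v = 1) (hαk : ∑ j ∈ Icc 1 n, α j = k) :
    GadgetColCounts n k α α (gadgetSolution n u v α) := by
  refine gadgetColCounts_of_red_green fun q hq => ?_
  obtain hq | rfl | rfl | ⟨j, hj, rfl⟩ := mem_Icc_two_mul_add_two hq
  · have hqn := (mem_Icc.1 hq).2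
    rw [filter_congr fun i _ => gadgetSolution_eq_zero_iff_of_le hqn,
      card_Icc_filter_le_sub_one_add α hα hq,
      card_filter_eq_zero_iff.2 fun i _ => gadgetSolution_ne_one_of_le hqn,
      gadgetSR_of_le hqn, gadgetSG_of_le hqn]
    exact ⟨rfl, rfl⟩
  · rw [filter_congr fun i _ => gadgetSolution_add_one_eq_zero_iff i,
      filter_congr fun i _ => gadgetSolution_add_one_eq_one_iff i, filter_eq', if_pos hu,
      filter_ne', card_erase_of_mem hu, card_singleton, Nat.card_Icc, gadgetSR_add_one,
      gadgetSG_add_one, Nat.add_sub_cancel]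
    exact ⟨rfl, rfl⟩
  · have hzero := card_filter_eq_zero_add_sum α hα
    have hred : #{i ∈ Icc 1 n | i = v ∨ α i = 0} = #{i ∈ Icc 1 n | α i = 0} + 1 := by
      rw [filter_or, filter_eq', if_pos hv, singleton_union, card_insert_of_notMem (by simp [hαv])]
    have hcompl := card_filter_add_card_filter_not (s := Icc 1 n) (fun i => i = v ∨ α i = 0)
    rw [filter_congr fun i _ => gadgetSolution_add_two_eq_zero_iff i,
      filter_congr fun i _ => gadgetSolution_add_two_eq_one_iff i, gadgetSR_add_two,
      gadgetSG_add_two]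
    rw [hαk, Nat.card_Icc] at hzero
    rw [Nat.card_Icc] at hcompl
    omega
  · have hαj := hα j hj
    rw [mem_Icc] at hj
    rw [card_filter_eq_zero_iff.2 fun i _ => gadgetSolution_add_two_add_ne_zero hj.1,
      filter_congr fun i _ => gadgetSolution_add_two_add_eq_one_iff hj.1,
      card_Icc_filter_le_sub_one_add (fun i => 1 - α i) (fun i _ => by omega) (mem_Icc.2 hj),
      gadgetSR_add_two_add hj.1, gadgetSG_add_two_add hj.1]
    omega

theorem gadgetFeasible_of_eq_one (hu : u ∈ Icc 1 n) (hv : v ∈ Icc 1 n) (huv : u ≠ v)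
    (hα : ∀ j ∈ Icc 1 n, α j ≤ 1) (hαv : α v = 1) (hαk : ∑ j ∈ Icc 1 n, α j = k) :
    GadgetFeasible n k u v α α :=
  gadgetFeasible_iff.2 ⟨_, gadgetRowCounts_gadgetSolution huv hα hαv,
    gadgetColCounts_gadgetSolution hu hv hα hαv hαk⟩

end Sufficiency

theorem stmt_11_general (n k u v : ℕ)
    (hu : 1 ≤ u) (hun : u ≤ n) (hv : 1 ≤ v) (hvn : v ≤ n) (huv : u ≠ v)
    (α : ℕ → ℕ)
    (hα01 : ∀ j, 1 ≤ j → j ≤ n → α j ≤ 1)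
    (hαk : ∑ j ∈ Finset.Icc 1 n, α j = k) :
    GadgetFeasible n k u v α α ↔ 1 ≤ α u + α v := by
  have hu' : u ∈ Icc 1 n := mem_Icc.2 ⟨hu, hun⟩
  have hv' : v ∈ Icc 1 n := mem_Icc.2 ⟨hv, hvn⟩
  have hα : ∀ j ∈ Icc 1 n, α j ≤ 1 := fun j hj => hα01 j (mem_Icc.1 hj).1 (mem_Icc.1 hj).2
  refine ⟨one_le_add_of_gadgetFeasible hu' hv' huv hα, fun h => ?_⟩
  have := hα u hu'
  have := hα v hv'
  rcases (by omega : α v = 1 ∨ α u = 1) with hαv | hαu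
  · exact gadgetFeasible_of_eq_one hu' hv' huv hα hαv hαk
  · exact gadgetFeasible_comm.1 (gadgetFeasible_of_eq_one hv' hu' huv.symm hα hαu hαk)

/-- Suppose `α = β` in the gadget instance.  Then the gadget instance is
feasible if and only if `α_u + α_v ≥ 1`. -/
theorem stmt_11 (n k u v : ℕ) (hk1 : 1 ≤ k) (hkn : k ≤ n)
    (hu : 1 ≤ u) (hun : u ≤ n) (hv : 1 ≤ v) (hvn : v ≤ n) (huv : u ≠ v)
    (α : ℕ → ℕ)
    (hα01 : ∀ j, 1 ≤ j → j ≤ n → α j ≤ 1)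
    (hαk : ∑ j ∈ Finset.Icc 1 n, α j = k) :
    GadgetFeasible n k u v α α ↔ 1 ≤ α u + α v :=
  stmt_11_general n k u v hu hun hv hvn huv α hα01 hαk
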